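/- arXiv:0807.2440 — 6 statements merged into one kernel-verified Lean document; each statement's English description precedes it below -/
import Mathlib

section
/- If v₁ and v₂ are binary vectors of length n and weight k, and U₁, U₂ are k-dimensional subspaces of F_q^n whose reduced row echelon form generator matrices have leading entries (pivots) in the columns indexed by the nonzero positions of v₁ and v₂ respectively, then d_S(U₁, U₂) ≥ d_H(v₁, v₂), where d_H denotes Hamming distance. -/
open Module

/-- The subspace distance `d_S(U,V) = dim U + dim V - 2 dim (U ⊓ V)` (valued in `ℤ`). -/
noncomputable def subspaceDist (Fq : Type*) [Field Fq] (n : ℕ)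
    (U V : Submodule Fq (Fin n → Fq)) : ℤ :=
  (finrank Fq U : ℤ) + (finrank Fq V : ℤ) - 2 * (finrank Fq ↥(U ⊓ V) : ℤ)

/-- `M` is in reduced row echelon form with pivot columns `p`. -/
def IsRREFwithPivots {Fq : Type*} [Field Fq] {k n : ℕ}
    (M : Matrix (Fin k) (Fin n) Fq) (p : Fin k → Fin n) : Prop :=
  StrictMono p ∧
  (∀ i, M i (p i) = 1) ∧
  (∀ i (j : Fin n), (j : ℕ) < (p i : ℕ) → M i j = 0) ∧
  (∀ i i', i' ≠ i → M i' (p i) = 0)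

/-- Hamming distance between two binary vectors of length `n`. -/
def hammingDistB {n : ℕ} (v₁ v₂ : Fin n → Bool) : ℕ :=
  (Finset.univ.filter fun j => v₁ j ≠ v₂ j).card

/-- Any nonzero vector in the row space of an RREF matrix has its leading
(leftmost nonzero) entry in a pivot column. -/
lemma lead_pivot {Fq : Type*} [Field Fq] {k n : ℕ}
    {M : Matrix (Fin k) (Fin n) Fq} {p : Fin k → Fin n}
    (h : IsRREFwithPivots M p) {x : Fin n → Fq}
    (hx : x ∈ Submodule.span Fq (Set.range M)) (hx0 : x ≠ 0) :
    ∃ i, x (p i) ≠ 0 ∧ ∀ j : Fin n, (j : ℕ) < (p i : ℕ) → x j = 0 := by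
  classical
  obtain ⟨hmono, hone, hlt, hcol⟩ := h
  obtain ⟨c, hc⟩ := (Submodule.mem_span_range_iff_exists_fun Fq).mp hx
  have hcne : c ≠ 0 := by
    rintro rfl; apply hx0; rw [← hc]; simp
  have hs : (Finset.univ.filter fun i => c i ≠ 0).Nonempty := by
    rw [Finset.filter_nonempty_iff]
    by_contra hcon
    push_neg at hcon
    exact hcne (funext fun i => by simpa using hcon i (Finset.mem_univ i))
  set s := Finset.univ.filter fun i => c i ≠ 0 with hsdef
  set i₀ := s.min' hs with hi₀
  have hmem : i₀ ∈ s := s.min'_mem hs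
  have hc0 : c i₀ ≠ 0 := by simpa [hsdef] using hmem
  refine ⟨i₀, ?_, ?_⟩
  · have : x (p i₀) = c i₀ := by
      rw [← hc]
      simp only [Finset.sum_apply, Pi.smul_apply, smul_eq_mul]
      rw [Finset.sum_eq_single i₀]
      · rw [hone i₀]; ring
      · intro i _ hi; rw [hcol i₀ i hi]; ring
      · intro hmm; exact absurd (Finset.mem_univ i₀) hmm
    rw [this]; exact hc0
  · intro j hj
    rw [← hc]
    simp only [Finset.sum_apply, Pi.smul_apply, smul_eq_mul]
    apply Finset.sum_eq_zero
    intro i _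
    by_cases hci : c i = 0
    · rw [hci]; ring
    · have hile : i₀ ≤ i := s.min'_le i (by simp [hsdef, hci])
      have : (j : ℕ) < (p i : ℕ) := lt_of_lt_of_le hj (by exact_mod_cast hmono.monotone hile)
      rw [hlt i j this]; ring

/-- If the identifying (pivot) vectors of `U₁, U₂ ∈ G_q(n,k)` are `v₁, v₂`,
then `d_S(U₁,U₂) ≥ d_H(v₁,v₂)`. -/
theorem subspaceDist_ge_hammingDistB (Fq : Type*) [Field Fq] [Fintype Fq] (n k : ℕ)
    (v₁ v₂ : Fin n → Bool)
    (hw₁ : (Finset.univ.filter fun j => v₁ j = true).card = k)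
    (hw₂ : (Finset.univ.filter fun j => v₂ j = true).card = k)
    (U₁ U₂ : Submodule Fq (Fin n → Fq))
    (hU₁ : finrank Fq U₁ = k) (hU₂ : finrank Fq U₂ = k)
    (M₁ M₂ : Matrix (Fin k) (Fin n) Fq) (p₁ p₂ : Fin k → Fin n)
    (hM₁ : IsRREFwithPivots M₁ p₁) (hM₂ : IsRREFwithPivots M₂ p₂)
    (hspan₁ : Submodule.span Fq (Set.range M₁) = U₁)
    (hspan₂ : Submodule.span Fq (Set.range M₂) = U₂)
    (hp₁ : ∀ j, v₁ j = true ↔ ∃ i, p₁ i = j)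
    (hp₂ : ∀ j, v₂ j = true ↔ ∃ i, p₂ i = j) :
    (hammingDistB v₁ v₂ : ℤ) ≤ subspaceDist Fq n U₁ U₂ := by
  classical
  set A := Finset.univ.filter fun j => v₁ j = true with hA
  set B := Finset.univ.filter fun j => v₂ j = true with hB
  set S := A ∩ B with hS
  -- any vector of `U₁ ⊓ U₂` vanishing on `S` is zero
  have hinj : ∀ x ∈ U₁ ⊓ U₂, (∀ j ∈ S, x j = 0) → x = 0 := by
    intro x hx hvan
    by_contra hx0
    obtain ⟨i₁, hne₁, hz₁⟩ := lead_pivot hM₁ (hspan₁ ▸ hx.1) hx0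
    obtain ⟨i₂, hne₂, hz₂⟩ := lead_pivot hM₂ (hspan₂ ▸ hx.2) hx0
    have heq : p₁ i₁ = p₂ i₂ := by
      rcases lt_trichotomy ((p₁ i₁ : ℕ)) ((p₂ i₂ : ℕ)) with h | h | h
      · exact absurd (hz₂ _ h) hne₁
      · exact Fin.ext h
      · exact absurd (hz₁ _ h) hne₂
    have hmemS : p₁ i₁ ∈ S := by
      simp only [hS, hA, hB, Finset.mem_inter, Finset.mem_filter, Finset.mem_univ, true_and]
      exact ⟨(hp₁ _).mpr ⟨i₁, rfl⟩, (hp₂ _).mpr ⟨i₂, heq.symm⟩⟩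
    exact hne₁ (hvan _ hmemS)
  -- hence `dim (U₁ ⊓ U₂) ≤ |S|`
  let φ : ↥(U₁ ⊓ U₂) →ₗ[Fq] (↥S → Fq) :=
    (LinearMap.funLeft Fq Fq (fun s : ↥S => (s : Fin n))).comp (U₁ ⊓ U₂).subtype
  have hφ : Function.Injective φ := by
    rw [← LinearMap.ker_eq_bot, LinearMap.ker_eq_bot']
    intro m hm
    apply Subtype.ext
    refine hinj m.1 m.2 fun j hj => ?_
    have := congrFun hm ⟨j, hj⟩
    simpa [φ, LinearMap.funLeft] using this
  have hdim : finrank Fq ↥(U₁ ⊓ U₂) ≤ S.card := by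
    have := LinearMap.finrank_le_finrank_of_injective hφ
    rwa [finrank_fintype_fun_eq_card, Fintype.card_coe] at this
  -- counting: hammingDist + 2|S| = 2k
  have hfil : (Finset.univ.filter fun j => v₁ j ≠ v₂ j) = (A ∪ B) \ S := by
    ext j
    simp only [hS, hA, hB, Finset.mem_sdiff, Finset.mem_union, Finset.mem_inter,
      Finset.mem_filter, Finset.mem_univ, true_and]
    cases hv1 : v₁ j <;> cases hv2 : v₂ j <;> simp
  have hSsub : S ⊆ A ∪ B := Finset.inter_subset_left.trans Finset.subset_union_left
  have hcard : hammingDistB v₁ v₂ + S.card + S.card = k + k := by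
    have h1 : hammingDistB v₁ v₂ = (A ∪ B).card - S.card := by
      rw [hammingDistB, hfil, Finset.card_sdiff_of_subset hSsub]
    have h2 : (A ∪ B).card + (A ∩ B).card = A.card + B.card :=
      Finset.card_union_add_card_inter A B
    have h3 : S.card ≤ (A ∪ B).card := Finset.card_le_card hSsub
    rw [← hS] at h2
    omega
  -- conclude
  rw [subspaceDist, hU₁, hU₂]
  have hc' : (hammingDistB v₁ v₂ : ℤ) + S.card + S.card = k + k := by exact_mod_cast hcard
  have hd' : (finrank Fq ↥(U₁ ⊓ U₂) : ℤ) ≤ S.card := by exact_mod_cast hdim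
  linarith
end

section
/- Let v be a binary vector of length n and weight k, and let U₁, U₂ be k-dimensional subspaces of F_q^n whose reduced row echelon form generator matrices both have pivots in the columns indexed by the nonzero positions of v, with dot-part matrices M₁ and M₂ respectively. Then d_S(U₁, U₂) = 2·rank(M₁ - M₂). -/
open Module

/-- If `U₁, U₂` are `k`-dimensional subspaces of `F_q^n` whose reduced row
echelon generator matrices `M₁, M₂` lie in the same echelon Ferrers form `EF(v)`
(i.e. have the same pivot columns `p`, indexed by the support of `v`), then
`d_S(U₁,U₂) = 2 · rank(M₁ - M₂)`.  (Since `M₁ - M₂` vanishes on the pivot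
columns and to the left of the pivots, its rank equals the rank of the
difference of the dot-part matrices.) -/
theorem subspaceDist_same_ferrers (Fq : Type*) [Field Fq] [Fintype Fq] (n k : ℕ)
    (v : Fin n → Bool)
    (hw : (Finset.univ.filter fun j => v j = true).card = k)
    (U₁ U₂ : Submodule Fq (Fin n → Fq))
    (hU₁ : finrank Fq U₁ = k) (hU₂ : finrank Fq U₂ = k)
    (M₁ M₂ : Matrix (Fin k) (Fin n) Fq) (p : Fin k → Fin n)
    (hM₁ : IsRREFwithPivots M₁ p) (hM₂ : IsRREFwithPivots M₂ p)
    (hp : ∀ j, v j = true ↔ ∃ i, p i = j)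
    (hspan₁ : Submodule.span Fq (Set.range M₁) = U₁)
    (hspan₂ : Submodule.span Fq (Set.range M₂) = U₂) :
    subspaceDist Fq n U₁ U₂ = 2 * ((M₁ - M₂).rank : ℤ) := by
  classical
  set D : Matrix (Fin k) (Fin n) Fq := M₁ - M₂ with hD
  have hDpiv : ∀ i j, D i (p j) = 0 := by
    intro i j
    by_cases h : i = j
    · subst h
      simp [hD, Matrix.sub_apply, hM₁.2.1 i, hM₂.2.1 i]
    · simp [hD, Matrix.sub_apply, hM₁.2.2.2 j i h, hM₂.2.2.2 j i h]
  set SD : Submodule Fq (Fin n → Fq) := Submodule.span Fq (Set.range D) with hSD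
  -- the sup of U₁ and U₂ equals the sup of U₁ and the row space of D
  have hsup : U₁ ⊔ U₂ = U₁ ⊔ SD := by
    rw [← hspan₁, ← hspan₂, hSD]
    apply le_antisymm
    · apply sup_le le_sup_left
      rw [Submodule.span_le]
      rintro _ ⟨i, rfl⟩
      have h2 : M₂ i = M₁ i - D i := by
        funext j; simp [hD, Matrix.sub_apply]
      rw [h2]
      exact sub_mem (Submodule.mem_sup_left (Submodule.subset_span ⟨i, rfl⟩))
        (Submodule.mem_sup_right (Submodule.subset_span ⟨i, rfl⟩))
    · apply sup_le le_sup_left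
      rw [Submodule.span_le]
      rintro _ ⟨i, rfl⟩
      have h2 : D i = M₁ i - M₂ i := by
        funext j; simp [hD, Matrix.sub_apply]
      rw [h2]
      exact sub_mem (Submodule.mem_sup_left (Submodule.subset_span ⟨i, rfl⟩))
        (Submodule.mem_sup_right (Submodule.subset_span ⟨i, rfl⟩))
  -- U₁ and the row space of D intersect trivially
  have hinf : U₁ ⊓ SD = ⊥ := by
    rw [Submodule.eq_bot_iff]
    rintro x hx
    obtain ⟨hx1, hxD⟩ := Submodule.mem_inf.mp hx
    rw [← hspan₁] at hx1
    obtain ⟨c, rfl⟩ := (Submodule.mem_span_range_iff_exists_fun Fq).mp hx1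
    obtain ⟨d, hd⟩ := (Submodule.mem_span_range_iff_exists_fun Fq).mp (hSD ▸ hxD)
    have hc : ∀ j, c j = 0 := by
      intro j
      have hval : (∑ i, c i • M₁ i) (p j) = c j := by
        simp only [Finset.sum_apply, Pi.smul_apply, smul_eq_mul]
        rw [Finset.sum_eq_single j]
        · simp [hM₁.2.1 j]
        · intro i _ hij; simp [hM₁.2.2.2 j i hij]
        · simp
      have hval' : (∑ i, d i • D i) (p j) = 0 := by
        simp only [Finset.sum_apply, Pi.smul_apply, smul_eq_mul]
        apply Finset.sum_eq_zero
        intro i _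
        simp [hDpiv i j]
      rw [← hval, ← hd, hval']
    have : ∀ i, c i • M₁ i = 0 := by intro i; simp [hc i]
    simp [this]
  have fd1 : FiniteDimensional Fq U₁ := inferInstance
  have fd2 : FiniteDimensional Fq U₂ := inferInstance
  have fdD : FiniteDimensional Fq SD := inferInstance
  have hdim1 : finrank Fq ↥(U₁ ⊔ U₂) + finrank Fq ↥(U₁ ⊓ U₂) = k + k := by
    rw [Submodule.finrank_sup_add_finrank_inf_eq, hU₁, hU₂]
  have hrankD : D.rank = finrank Fq SD := Matrix.rank_eq_finrank_span_row D
  have hdim2 : finrank Fq ↥(U₁ ⊔ U₂) = k + D.rank := by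
    rw [hsup, hrankD]
    have := Submodule.finrank_sup_add_finrank_inf_eq U₁ SD
    rw [hinf, finrank_bot, add_zero, hU₁] at this
    exact this
  rw [subspaceDist, hU₁, hU₂]
  have h1 : (finrank Fq ↥(U₁ ⊓ U₂) : ℤ) = (k : ℤ) - (D.rank : ℤ) := by
    have := hdim1
    rw [hdim2] at this
    omega
  rw [h1]
  ring
end

section
/- Let C be a binary constant-weight code of length n, weight k, and minimum Hamming distance 2δ. For each v ∈ C, let C_v be a rank-metric code of matrices fitting the Ferrers diagram of EF(v) with minimum rank distance δ. Then the union over v ∈ C of the subspaces generated by EF(v[c]), c ∈ C_v, is a constant-dimension code in G_q(n,k) with minimum subspace distance 2δ (assuming each C_v has at least two codewords or the combinatorial setup guarantees distance 2δ is attained). -/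
open Module

/-!
Two subspaces in the code either come from the same pivot vector `v`, and then
`d_S(U, V) = 2 rank (M₁ - M₂)` because `U + V = V + W` with `W` the row space of `M₁ - M₂`, and
`W` vanishes on the pivots, hence meets `V` trivially; or from distinct `v₁ ≠ v₂`, and then every nonzero
vector of `U ⊓ V` has its leading entry at a pivot common to both, so
`dim (U ⊓ V) ≤ |supp v₁ ∩ supp v₂|` and `d_S(U, V) ≥ d_H(v₁, v₂) ≥ 2δ`.
-/

open Finset Submodule

section Combinatorics

variable {α : Type*} [DecidableEq α]

theorem Finset.card_symmDiff_add_two_mul_card_inter (s t : Finset α) :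
    #(symmDiff s t) + 2 * #(s ∩ t) = #s + #t := by
  have hsub : s ∩ t ⊆ s ∪ t := inter_subset_left.trans subset_union_left
  rw [symmDiff_eq_sup_sdiff_inf, ← card_union_add_card_inter, two_mul, ← add_assoc]
  exact congrArg (· + #(s ∩ t)) (card_sdiff_add_card_eq_card hsub)

variable [Fintype α]

theorem Finset.filter_ne_eq_symmDiff (v₁ v₂ : α → Bool) :
    univ.filter (fun j => v₁ j ≠ v₂ j) =
      symmDiff (univ.filter (v₁ · = true)) (univ.filter (v₂ · = true)) := by
  ext j
  simp only [mem_filter, mem_univ, true_and, mem_symmDiff]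
  cases v₁ j <;> cases v₂ j <;> simp

theorem Finset.image_eq_filter_of_forall_iff {ι : Type*} [Fintype ι] {v : α → Bool}
    {p : ι → α} (h : ∀ j, v j = true ↔ ∃ i, p i = j) :
    univ.image p = univ.filter (v · = true) := by
  ext j
  simp [h j]

end Combinatorics

section RowSpace

variable {R : Type*} [Ring R] {m n : Type*}

theorem Matrix.apply_eq_zero_of_mem_span_rows {A : Matrix m n R} {c : n} (hA : ∀ i, A i c = 0)
    {u : n → R} (hu : u ∈ span R (Set.range A)) : u c = 0 :=
  (span_le (p := LinearMap.ker (LinearMap.proj c)).2 (by rintro _ ⟨i, rfl⟩; exact hA i)) hu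

theorem Matrix.span_rows_sup_span_rows_eq (A B : Matrix m n R) :
    span R (Set.range A) ⊔ span R (Set.range B) =
      span R (Set.range B) ⊔ span R (Set.range (A - B)) := by
  apply le_antisymm
  · refine sup_le (span_le.2 ?_) le_sup_left
    rintro _ ⟨i, rfl⟩
    rw [SetLike.mem_coe, ← add_sub_cancel (B i) (A i)]
    exact add_mem (mem_sup_left (subset_span ⟨i, rfl⟩)) (mem_sup_right (subset_span ⟨i, rfl⟩))
  · refine sup_le le_sup_right (span_le.2 ?_)
    rintro _ ⟨i, rfl⟩
    exact sub_mem (mem_sup_left (subset_span ⟨i, rfl⟩)) (mem_sup_right (subset_span ⟨i, rfl⟩))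

theorem Matrix.rank_pos_of_ne_zero {K : Type*} [Field K] [Fintype m] [Fintype n]
    {A : Matrix m n K} (hA : A ≠ 0) : 0 < A.rank := by
  rw [A.rank_eq_finrank_span_row, Nat.pos_iff_ne_zero, Ne, Submodule.finrank_eq_zero,
    span_eq_bot]
  rintro hrows
  exact hA (funext fun i => hrows _ ⟨i, rfl⟩)

theorem Submodule.finrank_le_card_of_forall_exists_ne_zero {K : Type*} [Field K]
    (W : Submodule K (n → K)) (S : Finset n) (h : ∀ u ∈ W, u ≠ 0 → ∃ j ∈ S, u j ≠ 0) :
    finrank K W ≤ #S := by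
  let f : W →ₗ[K] (S → K) := LinearMap.funLeft K K Subtype.val ∘ₗ W.subtype
  have hf : Function.Injective f := by
    rw [← LinearMap.ker_eq_bot, eq_bot_iff]
    intro u hu
    by_contra hne
    obtain ⟨j, hjS, hj⟩ := h u u.2 (by simpa using hne)
    exact hj (congrFun (LinearMap.mem_ker.1 hu) ⟨j, hjS⟩)
  simpa using LinearMap.finrank_le_finrank_of_injective hf

end RowSpace

theorem subspaceDist_self {Fq : Type*} [Field Fq] {n : ℕ} (U : Submodule Fq (Fin n → Fq)) :
    subspaceDist Fq n U U = 0 := by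
  rw [subspaceDist, inf_idem]
  ring

namespace IsRREFwithPivots

variable {Fq : Type*} [Field Fq] {k n : ℕ} {M M₁ M₂ : Matrix (Fin k) (Fin n) Fq}
  {p p₁ p₂ : Fin k → Fin n} {u : Fin n → Fq}

theorem apply_pivot (h : IsRREFwithPivots M p) (i i' : Fin k) :
    M i (p i') = if i = i' then 1 else 0 := by
  split_ifs with hii
  · exact hii ▸ h.2.1 i
  · exact h.2.2.2 i' i hii

theorem eq_sum_smul_of_mem_span (h : IsRREFwithPivots M p) (hu : u ∈ span Fq (Set.range M)) :
    u = ∑ i, u (p i) • M i := by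
  induction hu using Submodule.span_induction with
  | mem x hx =>
    obtain ⟨i, rfl⟩ := hx
    rw [sum_eq_single i (fun i' _ hi' => by rw [h.apply_pivot, if_neg hi'.symm, zero_smul])
      (absurd (mem_univ i)), h.2.1, one_smul]
  | zero => simp
  | add x y _ _ hx hy =>
    nth_rewrite 1 [hx, hy]
    simp only [Pi.add_apply, add_smul, sum_add_distrib]
  | smul a x _ hx =>
    nth_rewrite 1 [hx]
    simp only [Pi.smul_apply, smul_eq_mul, mul_smul, smul_sum]

theorem linearIndependent (h : IsRREFwithPivots M p) : LinearIndependent Fq M := by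
  refine Fintype.linearIndependent_iff.2 fun g hg i => ?_
  simpa [h.apply_pivot] using congrFun hg (p i)

theorem finrank_span_rows (h : IsRREFwithPivots M p) :
    finrank Fq (span Fq (Set.range M)) = k := by
  rw [finrank_span_eq_card h.linearIndependent, Fintype.card_fin]

theorem eq_zero_of_apply_pivot_eq_zero (h : IsRREFwithPivots M p)
    (hu : u ∈ span Fq (Set.range M)) (hz : ∀ i, u (p i) = 0) : u = 0 := by
  rw [h.eq_sum_smul_of_mem_span hu]
  simp [hz]

theorem exists_leading_pivot (h : IsRREFwithPivots M p) (hu : u ∈ span Fq (Set.range M))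
    (hne : u ≠ 0) : ∃ i, u (p i) ≠ 0 ∧ ∀ j, j < p i → u j = 0 := by
  classical
  set s := univ.filter fun i => u (p i) ≠ 0
  have hs : s.Nonempty := by
    rw [filter_nonempty_iff]
    by_contra! hz
    exact hne (h.eq_zero_of_apply_pivot_eq_zero hu fun i => hz i (mem_univ i))
  refine ⟨_, (mem_filter.1 (min'_mem _ hs)).2, fun j hj => ?_⟩
  rw [h.eq_sum_smul_of_mem_span hu]
  simp only [Finset.sum_apply, Pi.smul_apply, smul_eq_mul]
  refine sum_eq_zero fun i _ => ?_
  by_cases hi : u (p i) = 0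
  · rw [hi, zero_mul]
  · have hle := s.min'_le i (mem_filter.2 ⟨mem_univ _, hi⟩)
    rw [h.2.2.1 i j (hj.trans_le (h.1.monotone hle)), mul_zero]

theorem sub_apply_pivot (h₁ : IsRREFwithPivots M₁ p) (h₂ : IsRREFwithPivots M₂ p) (i i' : Fin k) :
    (M₁ - M₂) i (p i') = 0 := by
  rw [Matrix.sub_apply, h₁.apply_pivot, h₂.apply_pivot, sub_self]

theorem span_rows_inf_span_rows_sub_eq_bot (h₁ : IsRREFwithPivots M₁ p)
    (h₂ : IsRREFwithPivots M₂ p) :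
    span Fq (Set.range M₂) ⊓ span Fq (Set.range (M₁ - M₂)) = ⊥ :=
  eq_bot_iff.2 fun _ hu => (mem_bot Fq).2 <| h₂.eq_zero_of_apply_pivot_eq_zero hu.1 fun i' =>
    Matrix.apply_eq_zero_of_mem_span_rows (fun i => sub_apply_pivot h₁ h₂ i i') hu.2

theorem finrank_inf_add_rank_sub (h₁ : IsRREFwithPivots M₁ p) (h₂ : IsRREFwithPivots M₂ p) :
    finrank Fq ↥(span Fq (Set.range M₁) ⊓ span Fq (Set.range M₂)) + (M₁ - M₂).rank = k := by
  have hVW := finrank_sup_add_finrank_inf_eq (span Fq (Set.range M₂))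
    (span Fq (Set.range (M₁ - M₂)))
  rw [← Matrix.span_rows_sup_span_rows_eq, span_rows_inf_span_rows_sub_eq_bot h₁ h₂, finrank_bot,
    h₂.finrank_span_rows] at hVW
  have hrank : (M₁ - M₂).rank = finrank Fq (span Fq (Set.range (M₁ - M₂))) :=
    Matrix.rank_eq_finrank_span_row _
  have hUV := finrank_sup_add_finrank_inf_eq (span Fq (Set.range M₁)) (span Fq (Set.range M₂))
  rw [h₁.finrank_span_rows, h₂.finrank_span_rows] at hUV
  omega

theorem subspaceDist_eq_two_mul_rank (h₁ : IsRREFwithPivots M₁ p)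
    (h₂ : IsRREFwithPivots M₂ p) :
    subspaceDist Fq n (span Fq (Set.range M₁)) (span Fq (Set.range M₂)) =
      2 * (M₁ - M₂).rank := by
  have := finrank_inf_add_rank_sub h₁ h₂
  rw [subspaceDist, h₁.finrank_span_rows, h₂.finrank_span_rows]
  omega

theorem span_rows_ne_of_ne (h₁ : IsRREFwithPivots M₁ p) (h₂ : IsRREFwithPivots M₂ p)
    (hne : M₁ ≠ M₂) : span Fq (Set.range M₁) ≠ span Fq (Set.range M₂) := by
  intro heq
  have hdist := subspaceDist_eq_two_mul_rank h₁ h₂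
  rw [heq, subspaceDist_self] at hdist
  have := Matrix.rank_pos_of_ne_zero (sub_ne_zero.2 hne)
  omega

theorem finrank_inf_le_card_inter (h₁ : IsRREFwithPivots M₁ p₁) (h₂ : IsRREFwithPivots M₂ p₂) :
    finrank Fq ↥(span Fq (Set.range M₁) ⊓ span Fq (Set.range M₂)) ≤
      #(univ.image p₁ ∩ univ.image p₂) := by
  refine finrank_le_card_of_forall_exists_ne_zero _ _ fun u hu hne => ?_
  obtain ⟨i₁, hne₁, hz₁⟩ := h₁.exists_leading_pivot hu.1 hne
  obtain ⟨i₂, hne₂, hz₂⟩ := h₂.exists_leading_pivot hu.2 hne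
  have heq : p₁ i₁ = p₂ i₂ :=
    le_antisymm (not_lt.1 fun hgt => hne₂ (hz₁ _ hgt)) (not_lt.1 fun hlt => hne₁ (hz₂ _ hlt))
  refine ⟨p₁ i₁, mem_inter.2 ⟨mem_image_of_mem _ (mem_univ _), ?_⟩, hne₁⟩
  exact heq ▸ mem_image_of_mem _ (mem_univ _)

theorem card_symmDiff_le_subspaceDist (h₁ : IsRREFwithPivots M₁ p₁)
    (h₂ : IsRREFwithPivots M₂ p₂) :
    (#(symmDiff (univ.image p₁) (univ.image p₂)) : ℤ) ≤
      subspaceDist Fq n (span Fq (Set.range M₁)) (span Fq (Set.range M₂)) := by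
  have hcard := card_symmDiff_add_two_mul_card_inter (univ.image p₁) (univ.image p₂)
  rw [card_image_of_injective _ h₁.1.injective, card_image_of_injective _ h₂.1.injective,
    card_univ, Fintype.card_fin] at hcard
  have := finrank_inf_le_card_inter h₁ h₂
  rw [subspaceDist, h₁.finrank_span_rows, h₂.finrank_span_rows]
  omega

end IsRREFwithPivots

theorem multilevel_construction_general (Fq : Type*) [Field Fq] (n k δ : ℕ)
    (C : Set (Fin n → Bool))
    (hdH : ∀ v₁ ∈ C, ∀ v₂ ∈ C, v₁ ≠ v₂ →
      2 * δ ≤ (Finset.univ.filter fun j => v₁ j ≠ v₂ j).card)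
    (Cv : (Fin n → Bool) → Set (Matrix (Fin k) (Fin n) Fq))
    (piv : (Fin n → Bool) → Fin k → Fin n)
    (hpiv : ∀ v ∈ C, ∀ j, v j = true ↔ ∃ i, piv v i = j)
    (hRREF : ∀ v ∈ C, ∀ M ∈ Cv v, IsRREFwithPivots M (piv v))
    (hrk : ∀ v ∈ C, ∀ M₁ ∈ Cv v, ∀ M₂ ∈ Cv v, M₁ ≠ M₂ → δ ≤ (M₁ - M₂).rank)
    (hattain : ∃ v ∈ C, ∃ M₁ ∈ Cv v, ∃ M₂ ∈ Cv v, M₁ ≠ M₂ ∧ (M₁ - M₂).rank = δ)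
    (Code : Set (Submodule Fq (Fin n → Fq)))
    (hCode : Code = {U | ∃ v ∈ C, ∃ M ∈ Cv v, U = Submodule.span Fq (Set.range M)}) :
    (∀ U ∈ Code, finrank Fq U = k) ∧
    (∀ U ∈ Code, ∀ V ∈ Code, U ≠ V → (2 * δ : ℤ) ≤ subspaceDist Fq n U V) ∧
    (∃ U ∈ Code, ∃ V ∈ Code, U ≠ V ∧ subspaceDist Fq n U V = 2 * δ) := by
  subst hCode
  refine ⟨?_, ?_, ?_⟩
  · rintro _ ⟨v, hv, M, hM, rfl⟩
    exact (hRREF v hv M hM).finrank_span_rows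
  · rintro _ ⟨v₁, hv₁, M₁, hM₁, rfl⟩ _ ⟨v₂, hv₂, M₂, hM₂, rfl⟩ hUV
    have h₁ := hRREF v₁ hv₁ M₁ hM₁
    have h₂ := hRREF v₂ hv₂ M₂ hM₂
    obtain rfl | hv := eq_or_ne v₁ v₂
    · have hM : M₁ ≠ M₂ := by rintro rfl; exact hUV rfl
      rw [h₁.subspaceDist_eq_two_mul_rank h₂]
      exact_mod_cast Nat.mul_le_mul_left 2 (hrk v₁ hv₁ M₁ hM₁ M₂ hM₂ hM)
    · have hdist := h₁.card_symmDiff_le_subspaceDist h₂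
      rw [image_eq_filter_of_forall_iff (hpiv v₁ hv₁), image_eq_filter_of_forall_iff (hpiv v₂ hv₂),
        ← filter_ne_eq_symmDiff] at hdist
      exact le_trans (by exact_mod_cast hdH v₁ hv₁ v₂ hv₂ hv) hdist
  · obtain ⟨v, hv, M₁, hM₁, M₂, hM₂, hM, hrank⟩ := hattain
    have h₁ := hRREF v hv M₁ hM₁
    have h₂ := hRREF v hv M₂ hM₂
    refine ⟨_, ⟨v, hv, M₁, hM₁, rfl⟩, _, ⟨v, hv, M₂, hM₂, rfl⟩, h₁.span_rows_ne_of_ne h₂ hM, ?_⟩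
    rw [h₁.subspaceDist_eq_two_mul_rank h₂, hrank]

/-- The multilevel construction: from a binary constant-weight code `C` of
length `n`, weight `k` and minimum Hamming distance `2δ`, and for each `v ∈ C`
a rank-metric code `Cv v` of matrices in the echelon Ferrers form `EF(v)`
(with pivots `piv v` at the support of `v`) with minimum rank distance `δ`,
the union of the row spaces of the matrices `EF(v[c])` is a constant-dimension
code in `G_q(n,k)` with minimum subspace distance `2δ`. -/
theorem multilevel_construction (Fq : Type*) [Field Fq] [Fintype Fq] (n k δ : ℕ)
    (C : Set (Fin n → Bool))
    (hwt : ∀ v ∈ C, (Finset.univ.filter fun j => v j = true).card = k)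
    (hdH : ∀ v₁ ∈ C, ∀ v₂ ∈ C, v₁ ≠ v₂ →
      2 * δ ≤ (Finset.univ.filter fun j => v₁ j ≠ v₂ j).card)
    (Cv : (Fin n → Bool) → Set (Matrix (Fin k) (Fin n) Fq))
    (piv : (Fin n → Bool) → Fin k → Fin n)
    (hpiv : ∀ v ∈ C, ∀ j, v j = true ↔ ∃ i, piv v i = j)
    (hRREF : ∀ v ∈ C, ∀ M ∈ Cv v, IsRREFwithPivots M (piv v))
    (hrk : ∀ v ∈ C, ∀ M₁ ∈ Cv v, ∀ M₂ ∈ Cv v, M₁ ≠ M₂ → δ ≤ (M₁ - M₂).rank)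
    (hattain : ∃ v ∈ C, ∃ M₁ ∈ Cv v, ∃ M₂ ∈ Cv v, M₁ ≠ M₂ ∧ (M₁ - M₂).rank = δ)
    (Code : Set (Submodule Fq (Fin n → Fq)))
    (hCode : Code = {U | ∃ v ∈ C, ∃ M ∈ Cv v, U = Submodule.span Fq (Set.range M)}) :
    (∀ U ∈ Code, finrank Fq U = k) ∧
    (∀ U ∈ Code, ∀ V ∈ Code, U ≠ V → (2 * δ : ℤ) ≤ subspaceDist Fq n U V) ∧
    (∃ U ∈ Code, ∃ V ∈ Code, U ≠ V ∧ subspaceDist Fq n U V = 2 * δ) :=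
  multilevel_construction_general Fq n k δ C hdH Cv piv hpiv hRREF hrk hattain Code hCode
end

section
/- Let C_v ⊆ F_q^{m×t} be a linear rank-metric code with minimum rank distance δ, all of whose codewords are supported on a Ferrers diagram F (i.e., entries outside F are zero). Then dim(C_v) is at most the number of dots of F contained in the last m - δ + 1 rows. -/
open Module

/-- Bound on Ferrers-diagram rank-metric codes: if all codewords of a linear
rank-metric code `Cv ⊆ F_q^{m×t}` with minimum rank distance `δ` are supported
on a Ferrers diagram `F`, then `dim Cv` is at most the number of dots of `F`
in the last `m - δ + 1` rows (rows of 0-based index `≥ δ - 1`). -/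
theorem ferrers_bound_rows (Fq : Type*) [Field Fq] [Fintype Fq] (m t δ : ℕ)
    (F : Finset (Fin m × Fin t))
    (hright : ∀ (i : Fin m) (j j' : Fin t), (i, j) ∈ F → j ≤ j' → (i, j') ∈ F)
    (hrows : ∀ (i i' : Fin m) (j : Fin t), (i', j) ∈ F → i ≤ i' → (i, j) ∈ F)
    (Cv : Submodule Fq (Matrix (Fin m) (Fin t) Fq))
    (hsupp : ∀ M ∈ Cv, ∀ i j, (i, j) ∉ F → M i j = 0)
    (hmin : ∀ M ∈ Cv, M ≠ 0 → δ ≤ M.rank)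
    (hex : ∃ M ∈ Cv, M ≠ 0 ∧ M.rank = δ) :
    finrank Fq Cv ≤ (F.filter fun p => δ - 1 ≤ (p.1 : ℕ)).card := by
  classical
  set S := F.filter fun p => δ - 1 ≤ (p.1 : ℕ) with hS
  -- linear map from Cv to functions on S
  let φ : Cv →ₗ[Fq] ((p : S) → Fq) :=
    { toFun := fun M p => (M : Matrix (Fin m) (Fin t) Fq) p.1.1 p.1.2
      map_add' := fun M N => rfl
      map_smul' := fun c M => rfl }
  have hinj : Function.Injective φ := by
    rw [injective_iff_map_eq_zero]
    intro M hM
    ext i j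
    simp only [Submodule.coe_zero, Matrix.zero_apply]
    -- M vanishes on rows with index ≥ δ - 1
    have hzero : ∀ (i : Fin m), δ - 1 ≤ (i : ℕ) → ∀ j, (M : Matrix (Fin m) (Fin t) Fq) i j = 0 := by
      intro i hi j
      by_cases hF : (i, j) ∈ F
      · have hp : (i, j) ∈ S := Finset.mem_filter.mpr ⟨hF, hi⟩
        exact congrFun hM ⟨(i, j), hp⟩
      · exact hsupp M M.2 i j hF
    -- hence rank M ≤ δ - 1
    by_contra hne
    have hMne : (M : Matrix (Fin m) (Fin t) Fq) ≠ 0 := by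
      intro h
      apply hne
      have := congrFun (congrFun h i) j
      simpa using this
    have hδ : δ ≤ (M : Matrix (Fin m) (Fin t) Fq).rank := hmin M M.2 hMne
    have hδ1 : 1 ≤ δ := by
      by_contra h
      push_neg at h
      interval_cases δ
      exact hMne (by ext i j; exact hzero i (Nat.zero_le _) j)
    -- rows of M lie in span of rows with index < δ - 1
    set T : Finset (Fin t → Fq) :=
      (Finset.univ.filter fun i : Fin m => ((i : ℕ) < δ - 1)).image
        fun i => (M : Matrix (Fin m) (Fin t) Fq) i with hT
    have hsubset : Set.range ((M : Matrix (Fin m) (Fin t) Fq)) ⊆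
        insert 0 (T : Set (Fin t → Fq)) := by
      rintro _ ⟨i, rfl⟩
      by_cases hi : (i : ℕ) < δ - 1
      · exact Set.mem_insert_of_mem _ (Finset.mem_coe.mpr
          (Finset.mem_image.mpr ⟨i, Finset.mem_filter.mpr ⟨Finset.mem_univ i, hi⟩, rfl⟩))
      · left
        ext j
        exact hzero i (le_of_not_gt hi) j
    have hrank : (M : Matrix (Fin m) (Fin t) Fq).rank ≤ δ - 1 := by
      rw [Matrix.rank_eq_finrank_span_row]
      have h1 : Submodule.span Fq (Set.range ((M : Matrix (Fin m) (Fin t) Fq))) ≤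
          Submodule.span Fq (T : Set (Fin t → Fq)) := by
        exact (Submodule.span_mono hsubset).trans (Submodule.span_insert_zero).le
      have h2 : finrank Fq (Submodule.span Fq (Set.range ((M : Matrix (Fin m) (Fin t) Fq)))) ≤
          finrank Fq (Submodule.span Fq (T : Set (Fin t → Fq))) :=
        Submodule.finrank_mono h1
      refine h2.trans ((finrank_span_finset_le_card T).trans ?_)
      refine (Finset.card_image_le).trans ?_
      have : (Finset.univ.filter fun i : Fin m => ((i : ℕ) < δ - 1)).card ≤
          (Finset.range (δ - 1)).card := by
        exact Finset.card_le_card_of_injOn (fun i : Fin m => (i : ℕ))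
          (fun i hi => Finset.mem_range.mpr (Finset.mem_filter.mp hi).2)
          (fun a _ b _ h => Fin.val_injective h)
      simpa using this
    omega
  calc finrank Fq Cv ≤ finrank Fq ((p : S) → Fq) :=
        LinearMap.finrank_le_finrank_of_injective hinj
    _ = S.card := by
        rw [Module.finrank_pi Fq]
        exact Fintype.card_coe S
end

section
/- Let C_v ⊆ F_q^{m×t} be a linear rank-metric code with minimum rank distance δ, all of whose codewords are supported on a Ferrers diagram F. Then dim(C_v) is at most the number of dots of F contained in the first t - δ + 1 columns. -/
open Module Matrix

lemma rank_pos_of_ne_zero {Fq : Type*} [Field Fq] {m t : ℕ}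
    (M : Matrix (Fin m) (Fin t) Fq) (h : M ≠ 0) : 0 < M.rank := by
  obtain ⟨i, j, hij⟩ : ∃ i j, M i j ≠ 0 := by
    by_contra hc
    push_neg at hc
    exact h (by ext i j; exact hc i j)
  rw [Matrix.rank]
  rw [Module.finrank_pos_iff]
  have hmem : (M *ᵥ Pi.single j 1) ∈ LinearMap.range M.mulVecLin := ⟨Pi.single j 1, rfl⟩
  refine nontrivial_of_ne ⟨_, hmem⟩ 0 ?_
  intro hz
  apply hij
  have : (M *ᵥ Pi.single j 1) = 0 := by
    simpa using congrArg Subtype.val hz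
  have := congrFun this i
  simpa [Matrix.mulVec_single] using this

lemma rank_le_card_cols {Fq : Type*} [Field Fq] {m t : ℕ}
    (M : Matrix (Fin m) (Fin t) Fq) (S : Finset (Fin t))
    (h : ∀ j ∉ S, ∀ i, M i j = 0) : M.rank ≤ S.card := by
  classical
  rw [Matrix.rank_eq_finrank_span_cols]
  have hsub : Set.range Mᵀ ⊆ insert 0 ↑(S.image fun j => Mᵀ j) := by
    rintro _ ⟨j, rfl⟩
    by_cases hj : j ∈ S
    · exact Set.mem_insert_of_mem _ (by simpa using ⟨j, hj, rfl⟩)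
    · left
      ext i
      exact h j hj i
  have h1 : finrank Fq (Submodule.span Fq (Set.range Mᵀ))
      ≤ finrank Fq (Submodule.span Fq (insert 0 ↑(S.image fun j => Mᵀ j))) :=
    Submodule.finrank_mono (Submodule.span_mono hsub)
  have h2 : Submodule.span Fq (insert 0 (↑(S.image fun j => Mᵀ j) : Set (Fin m → Fq)))
      = Submodule.span Fq (↑(S.image fun j => Mᵀ j) : Set (Fin m → Fq)) := Submodule.span_insert_zero
  have h3 : finrank Fq (Submodule.span Fq (↑(S.image fun j => Mᵀ j) : Set (Fin m → Fq)))
      ≤ (S.image fun j => Mᵀ j).card := finrank_span_finset_le_card _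
  rw [h2] at h1
  exact h1.trans (h3.trans Finset.card_image_le)

/-- Bound on Ferrers-diagram rank-metric codes: if all codewords of a linear
rank-metric code `Cv ⊆ F_q^{m×t}` with minimum rank distance `δ` are supported
on a Ferrers diagram `F`, then `dim Cv` is at most the number of dots of `F`
in the first `t - δ + 1` columns (columns of 0-based index `< t - δ + 1`). -/
theorem ferrers_bound_cols (Fq : Type*) [Field Fq] [Fintype Fq] (m t δ : ℕ)
    (F : Finset (Fin m × Fin t))
    (hright : ∀ (i : Fin m) (j j' : Fin t), (i, j) ∈ F → j ≤ j' → (i, j') ∈ F)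
    (hrows : ∀ (i i' : Fin m) (j : Fin t), (i', j) ∈ F → i ≤ i' → (i, j) ∈ F)
    (Cv : Submodule Fq (Matrix (Fin m) (Fin t) Fq))
    (hsupp : ∀ M ∈ Cv, ∀ i j, (i, j) ∉ F → M i j = 0)
    (hmin : ∀ M ∈ Cv, M ≠ 0 → δ ≤ M.rank)
    (hex : ∃ M ∈ Cv, M ≠ 0 ∧ M.rank = δ) :
    finrank Fq Cv ≤ (F.filter fun p => (p.2 : ℕ) < t - δ + 1).card := by
  classical
  obtain ⟨M₀, hM₀Cv, hM₀ne, hM₀rank⟩ := hex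
  -- t ≥ 1
  have ht : 1 ≤ t := by
    rcases Nat.eq_zero_or_pos t with h0 | h
    · exfalso; apply hM₀ne; ext i j; exact absurd j.2 (by omega)
    · exact h
  -- δ ≥ 1
  have hδ : 1 ≤ δ := hM₀rank ▸ rank_pos_of_ne_zero M₀ hM₀ne
  set P : Fin m × Fin t → Prop := fun p => (p.2 : ℕ) < t - δ + 1 with hP
  set G : Finset (Fin m × Fin t) := F.filter P with hG
  -- the evaluation map
  let φ : Cv →ₗ[Fq] (↥G → Fq) :=
    { toFun := fun x p => (x : Matrix (Fin m) (Fin t) Fq) p.1.1 p.1.2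
      map_add' := fun x y => rfl
      map_smul' := fun c x => rfl }
  have hinj : Function.Injective φ := by
    rw [injective_iff_map_eq_zero]
    intro x hx
    have hzero : ∀ p ∈ G, (x : Matrix (Fin m) (Fin t) Fq) p.1 p.2 = 0 := by
      intro p hp
      exact congrFun hx ⟨p, hp⟩
    -- x vanishes on all columns j with j < t - δ + 1
    have hcols : ∀ j : Fin t, (j : ℕ) < t - δ + 1 → ∀ i, (x : Matrix (Fin m) (Fin t) Fq) i j = 0 := by
      intro j hj i
      by_cases hF : (i, j) ∈ F
      · exact hzero (i, j) (Finset.mem_filter.mpr ⟨hF, hj⟩)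
      · exact hsupp _ x.2 i j hF
    by_contra hxne
    have hxne' : (x : Matrix (Fin m) (Fin t) Fq) ≠ 0 := by
      simpa [Submodule.coe_eq_zero] using hxne
    have hrk := hmin _ x.2 hxne'
    have hle : (x : Matrix (Fin m) (Fin t) Fq).rank ≤
        (Finset.univ.filter fun j : Fin t => ¬ (j : ℕ) < t - δ + 1).card := by
      apply rank_le_card_cols
      intro j hj i
      simp only [Finset.mem_filter, Finset.mem_univ, true_and, not_not] at hj
      exact hcols j hj i
    have hcard : (Finset.univ.filter fun j : Fin t => ¬ (j : ℕ) < t - δ + 1).card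
        = t - (t - δ + 1) := by
      set a := t - δ + 1 with ha'
      have ha : a ≤ t := by omega
      have himg : (Finset.univ.filter fun j : Fin t => ¬ (j : ℕ) < a)
          = Finset.univ.image (fun k : Fin (t - a) => (⟨a + k, by omega⟩ : Fin t)) := by
        ext j
        simp only [Finset.mem_filter, Finset.mem_univ, true_and, Finset.mem_image, not_lt]
        constructor
        · intro hja
          refine ⟨⟨(j : ℕ) - a, by omega⟩, ?_⟩
          apply Fin.ext
          simp
          omega
        · rintro ⟨k, rfl⟩
          simp
      rw [himg, Finset.card_image_of_injective _ ?_, Finset.card_univ, Fintype.card_fin]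
      intro x y hxy
      apply Fin.ext
      have := congrArg Fin.val hxy
      simpa using this
    omega
  have := LinearMap.finrank_le_finrank_of_injective hinj
  calc finrank Fq Cv ≤ finrank Fq (↥G → Fq) := this
    _ = G.card := by simp [Module.finrank_pi, Fintype.card_coe]
end

section
/- Let ℂ ⊆ G_q(n,k) be a code with minimum subspace distance 2δ, let Q be an (n-1)-dimensional subspace of F_q^n and v ∈ F_q^n with v ∉ Q. Define ℂ₁ = {c ∈ ℂ : c ⊆ Q} and ℂ_v = {c ∩ Q : c ∈ ℂ, v ∈ c}. Then the punctured code ℂ' = ℂ₁ ∪ ℂ_v has minimum subspace distance at least 2δ - 1. -/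
open Module

section Aux
variable {Fq : Type*} [Field Fq] {n : ℕ}

lemma aux_inf_ge (Q W : Submodule Fq (Fin n → Fq)) (hQ : (finrank Fq Q : ℤ) = (n : ℤ) - 1) :
    (finrank Fq W : ℤ) - 1 ≤ (finrank Fq ↥(W ⊓ Q) : ℤ) := by
  have hsum := Submodule.finrank_sup_add_finrank_inf_eq W Q
  have hle : finrank Fq ↥(W ⊔ Q) ≤ n := by
    have h := Submodule.finrank_le (W ⊔ Q)
    simpa using h
  have hsum' : (finrank Fq ↥(W ⊔ Q) : ℤ) + (finrank Fq ↥(W ⊓ Q) : ℤ)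
      = (finrank Fq W : ℤ) + (finrank Fq Q : ℤ) := by exact_mod_cast hsum
  have hle' : (finrank Fq ↥(W ⊔ Q) : ℤ) ≤ (n : ℤ) := by exact_mod_cast hle
  linarith

lemma aux_inf_eq (Q W : Submodule Fq (Fin n → Fq)) (hQ : (finrank Fq Q : ℤ) = (n : ℤ) - 1)
    {w : Fin n → Fq} (hwW : w ∈ W) (hwQ : w ∉ Q) :
    (finrank Fq ↥(W ⊓ Q) : ℤ) = (finrank Fq W : ℤ) - 1 := by
  have hsum := Submodule.finrank_sup_add_finrank_inf_eq W Q
  have hle : finrank Fq ↥(W ⊔ Q) ≤ n := by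
    have h := Submodule.finrank_le (W ⊔ Q)
    simpa using h
  have hlt : Q < W ⊔ Q := by
    refine lt_of_le_of_ne le_sup_right ?_
    intro h
    exact hwQ (h ▸ (le_sup_left : W ≤ W ⊔ Q) hwW)
  have hlt' : finrank Fq Q < finrank Fq ↥(W ⊔ Q) := Submodule.finrank_lt_finrank_of_lt hlt
  have hsum' : (finrank Fq ↥(W ⊔ Q) : ℤ) + (finrank Fq ↥(W ⊓ Q) : ℤ)
      = (finrank Fq W : ℤ) + (finrank Fq Q : ℤ) := by exact_mod_cast hsum
  have hle' : (finrank Fq ↥(W ⊔ Q) : ℤ) ≤ (n : ℤ) := by exact_mod_cast hle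
  have hlt'' : (finrank Fq Q : ℤ) < (finrank Fq ↥(W ⊔ Q) : ℤ) := by exact_mod_cast hlt'
  linarith

end Aux

/-- Puncturing: if `ℂ ⊆ G_q(n,k)` has minimum subspace distance `2δ`, `Q` is a
hyperplane and `v ∉ Q`, then `ℂ' = {c ∈ ℂ : c ⊆ Q} ∪ {c ∩ Q : c ∈ ℂ, v ∈ c}`
has minimum subspace distance at least `2δ - 1`. -/
theorem punctured_code_min_dist (Fq : Type*) [Field Fq] [Fintype Fq] (n k δ : ℕ)
    (hδ : 1 ≤ δ)
    (C : Set (Submodule Fq (Fin n → Fq)))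
    (hdim : ∀ c ∈ C, finrank Fq c = k)
    (hmin : ∀ c₁ ∈ C, ∀ c₂ ∈ C, c₁ ≠ c₂ → (2 * δ : ℤ) ≤ subspaceDist Fq n c₁ c₂)
    (hattain : ∃ c₁ ∈ C, ∃ c₂ ∈ C, c₁ ≠ c₂ ∧ subspaceDist Fq n c₁ c₂ = 2 * δ)
    (Q : Submodule Fq (Fin n → Fq)) (hQ : finrank Fq Q = n - 1)
    (v : Fin n → Fq) (hv : v ∉ Q)
    (C' : Set (Submodule Fq (Fin n → Fq)))
    (hC' : C' = {c | c ∈ C ∧ c ≤ Q} ∪ {d | ∃ c ∈ C, v ∈ c ∧ d = c ⊓ Q})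
    (hcard : ∃ a ∈ C', ∃ b ∈ C', a ≠ b) :
    ∀ a ∈ C', ∀ b ∈ C', a ≠ b → (2 * δ : ℤ) - 1 ≤ subspaceDist Fq n a b := by
  -- n ≥ 1
  have hn : 1 ≤ n := by
    rcases Nat.eq_zero_or_pos n with h0 | h1
    · subst h0
      exact absurd (by simpa [Subsingleton.elim v 0] using Q.zero_mem) hv
    · exact h1
  have hQZ : (finrank Fq Q : ℤ) = (n : ℤ) - 1 := by
    rw [hQ, Nat.cast_sub hn]; simp
  intro a ha b hb hab
  rw [hC'] at ha hb
  rcases ha with ⟨haC, haQ⟩ | ⟨c₁, hc₁C, hvc₁, rfl⟩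
  · rcases hb with ⟨hbC, hbQ⟩ | ⟨c₂, hc₂C, hvc₂, rfl⟩
    · -- both in C₁
      have := hmin a haC b hbC hab
      linarith
    · -- a ∈ C₁, b = c₂ ⊓ Q
      have hne : a ≠ c₂ := by
        rintro rfl; exact hv (haQ hvc₂)
      have hmain := hmin a haC c₂ hc₂C hne
      have h1 : a ⊓ (c₂ ⊓ Q) = a ⊓ c₂ := by
        rw [← inf_assoc, inf_eq_left.mpr (le_trans inf_le_left haQ)]
      have h2 := aux_inf_eq Q c₂ hQZ hvc₂ hv
      unfold subspaceDist at hmain ⊢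
      rw [h1]
      linarith
  · rcases hb with ⟨hbC, hbQ⟩ | ⟨c₂, hc₂C, hvc₂, rfl⟩
    · -- a = c₁ ⊓ Q, b ∈ C₁
      have hne : c₁ ≠ b := by
        rintro rfl; exact hv (hbQ hvc₁)
      have hmain := hmin c₁ hc₁C b hbC hne
      have h1 : c₁ ⊓ Q ⊓ b = c₁ ⊓ b := by
        rw [inf_right_comm, inf_eq_left.mpr (le_trans inf_le_right hbQ)]
      have h2 := aux_inf_eq Q c₁ hQZ hvc₁ hv
      unfold subspaceDist at hmain ⊢
      rw [h1]
      linarith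
    · -- both intersections
      have hne : c₁ ≠ c₂ := by
        rintro rfl; exact hab rfl
      have hmain := hmin c₁ hc₁C c₂ hc₂C hne
      have h1 : c₁ ⊓ Q ⊓ (c₂ ⊓ Q) = c₁ ⊓ c₂ ⊓ Q := by
        refine le_antisymm ?_ ?_
        · exact le_inf (le_inf (le_trans inf_le_left inf_le_left)
            (le_trans inf_le_right inf_le_left)) (le_trans inf_le_left inf_le_right)
        · exact le_inf (le_inf (le_trans inf_le_left inf_le_left) inf_le_right)
            (le_inf (le_trans inf_le_left inf_le_right) inf_le_right)
      have h2 := aux_inf_eq Q (c₁ ⊓ c₂) hQZ (Submodule.mem_inf.mpr ⟨hvc₁, hvc₂⟩) hv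
      have h3 := aux_inf_eq Q c₁ hQZ hvc₁ hv
      have h4 := aux_inf_eq Q c₂ hQZ hvc₂ hv
      unfold subspaceDist at hmain ⊢
      rw [h1]
      linarith
end
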